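/- arXiv:1706.02674 — 6 statements merged into one kernel-verified Lean document; each statement's English description precedes it below -/
import Mathlib

section
/- For y ∈ E× and x ∈ E with x x̄ + y + ȳ = 0, the identity β·n(x,y) = n(ȳ⁻¹x, y⁻¹)·h(ȳ⁻¹)·n'(-ȳ⁻¹x̄, y⁻¹) holds in GL₃(E). -/
/-! Multiply out both sides. Since `bar` is an involution, `h(ȳ⁻¹) = diag(ȳ⁻¹, -ȳ/y, y)`, and all
entries then agree identically except the `(1,1)` and `(2,2)` entries, which differ by multiples of
`x x̄ + y + ȳ`. -/

open Matrix

noncomputable section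

variable {E : Type*} [Field E]

/-- `β` = antidiag(1,1,1). -/
def betaMat (E : Type*) [Field E] : Matrix (Fin 3) (Fin 3) E :=
  !![0, 0, 1; 0, 1, 0; 1, 0, 0]

/-- `n(x,y)`, upper unipotent. -/
def nMat (bar : E → E) (x y : E) : Matrix (Fin 3) (Fin 3) E :=
  !![1, x, y; 0, 1, -(bar x); 0, 0, 1]

/-- `n'(x,y)`, lower unipotent. -/
def n'Mat (bar : E → E) (x y : E) : Matrix (Fin 3) (Fin 3) E :=
  !![1, 0, 0; x, 1, 0; y, -(bar x), 1]

/-- `h(x) = diag(x, -x̄ x⁻¹, x̄⁻¹)`. -/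
def hMat (bar : E → E) (x : E) : Matrix (Fin 3) (Fin 3) E :=
  !![x, 0, 0; 0, -(bar x) * x⁻¹, 0; 0, 0, (bar x)⁻¹]

theorem betaMat_mul_nMat (bar : E → E) (x y : E) :
    betaMat E * nMat bar x y = !![0, 0, 1; 0, 1, -bar x; 1, x, y] := by
  simp [betaMat, nMat]

theorem nMat_mul_hMat_mul_n'Mat (bar : E → E) (a b s c d : E) :
    nMat bar a b * hMat bar s * n'Mat bar c d =
      !![s - a * bar s * s⁻¹ * c + b * (bar s)⁻¹ * d,
          -(a * bar s * s⁻¹) - b * (bar s)⁻¹ * bar c, b * (bar s)⁻¹;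
        -(bar s * s⁻¹ * c) - bar a * (bar s)⁻¹ * d,
          -(bar s * s⁻¹) + bar a * (bar s)⁻¹ * bar c, -(bar a * (bar s)⁻¹);
        (bar s)⁻¹ * d, -((bar s)⁻¹ * bar c), (bar s)⁻¹] := by
  simp only [nMat, hMat, n'Mat, mul_fin_three, EmbeddingLike.apply_eq_iff_eq, vecCons_inj,
    and_true]
  refine ⟨⟨?_, ?_, ?_⟩, ⟨?_, ?_, ?_⟩, ⟨?_, ?_, ?_⟩⟩ <;> ring

/-- for `y ∈ E×` and `x x̄ + y + ȳ = 0`,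
`β·n(x,y) = n(ȳ⁻¹x, y⁻¹)·h(ȳ⁻¹)·n'(-ȳ⁻¹x̄, y⁻¹)` in `GL₃(E)`. -/
theorem beta_mul_nxy (bar : E →+* E) (hbar : ∀ z, bar (bar z) = z)
    (x y : E) (hy : y ≠ 0) (hxy : x * bar x + y + bar y = 0) :
    betaMat E * nMat bar x y =
      nMat bar ((bar y)⁻¹ * x) y⁻¹ * hMat bar (bar y)⁻¹ *
        n'Mat bar (-((bar y)⁻¹ * bar x)) y⁻¹ := by
  have hy' : bar y ≠ 0 := (map_ne_zero bar).mpr hy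
  have bar_inv : bar (bar y)⁻¹ = y⁻¹ := by rw [map_inv₀, hbar]
  rw [betaMat_mul_nMat, nMat_mul_hMat_mul_n'Mat]
  simp only [map_mul, map_neg, bar_inv, hbar, EmbeddingLike.apply_eq_iff_eq, vecCons_inj,
    and_true]
  refine ⟨⟨?_, ?_, ?_⟩, ⟨?_, ?_, ?_⟩, ⟨?_, ?_, ?_⟩⟩ <;> field_simp
  · linear_combination -hxy
  · ring
  · ring
  · linear_combination hxy

end
end

section
/- With notation as in the exchange lemma for U(2,1): if u = n(x₁,y₁) ∈ N_{n_K} and u' = n'(x,y) ∈ N'_{m_K} with n_K + m_K = 1 and n_K, m_K chosen so all relevant valuations are positive, then in the decomposition u'u = u₁ h u'₁ the second coordinate satisfies y₂ = y₁·(1 + \overline{x x₁} + y y₁)⁻¹, and v_E(y₂ - y₁) > v_E(y₁); in particular u ∈ N_{n_K + m} if and only if u₁ ∈ N_{n_K + m} for every integer m ≥ 0. -/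
private lemma withtop_self_add_self {a : WithTop ℤ} (hne : a ≠ ⊤) (h : a = a + a) :
    a = 0 := by
  lift a to ℤ using hne
  have : (a : WithTop ℤ) + a = ((a + a : ℤ) : WithTop ℤ) := by push_cast; ring
  rw [this] at h
  have := WithTop.coe_injective h
  have : a = 0 := by omega
  simp [this]

/-- valuation estimate in the exchange lemma: with
`y₂ = y₁·(1 + \overline{x x₁} + y y₁)⁻¹` as in the decomposition `u'u = u₁ h u'₁`, assuming
`u = n(x₁,y₁) ∈ N_{n_K}`, `u' = n'(x,y) ∈ N'_{m_K}`, `n_K + m_K = 1`, and that the valuation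
conditions ensure `1 + \overline{x x₁} + y y₁ ∈ 1 + 𝔭_E`, one has
`v_E(y₂ - y₁) > v_E(y₁)`; in particular, for every `m ≥ 0`,
`y₁ ∈ 𝔭_E^{n_K+m}` (i.e. `u ∈ N_{n_K+m}`) if and only if `y₂ ∈ 𝔭_E^{n_K+m}`
(i.e. `u₁ ∈ N_{n_K+m}`). -/
theorem exchange_valuation {E : Type*} [Field E] (bar : E →+* E)
    (hbar : ∀ z, bar (bar z) = z)
    (v : E → WithTop ℤ)
    (hv0 : ∀ z : E, v z = ⊤ ↔ z = 0)
    (hvmul : ∀ z w : E, v (z * w) = v z + v w)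
    (hvadd : ∀ z w : E, min (v z) (v w) ≤ v (z + w))
    (hvbar : ∀ z : E, v (bar z) = v z)
    (nK mK : ℤ) (hnm : nK + mK = 1)
    (x₁ y₁ x y : E)
    (hu : x₁ * bar x₁ + y₁ + bar y₁ = 0)
    (hu' : x * bar x + y + bar y = 0)
    (hy₁ : (nK : WithTop ℤ) ≤ v y₁)
    (hy : (mK : WithTop ℤ) ≤ v y)
    (hsmall : (1 : WithTop ℤ) ≤ v (bar (x * x₁) + y * y₁)) :
    (y₁ ≠ 0 → v y₁ < v (y₁ * (1 + bar (x * x₁) + y * y₁)⁻¹ - y₁)) ∧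
    (∀ m : ℕ, ((nK + m : ℤ) : WithTop ℤ) ≤ v y₁ ↔
        ((nK + m : ℤ) : WithTop ℤ) ≤ v (y₁ * (1 + bar (x * x₁) + y * y₁)⁻¹)) := by
  set t : E := bar (x * x₁) + y * y₁ with ht
  -- v 1 = 0
  have h1 : v 1 = 0 := by
    have hne : v (1 : E) ≠ ⊤ := fun h => one_ne_zero ((hv0 1).mp h)
    have : v (1 : E) = v 1 + v 1 := by
      have := hvmul 1 1; rw [one_mul] at this; exact this
    exact withtop_self_add_self hne this
  -- v (-1) = 0
  have hneg1 : v (-1 : E) = 0 := by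
    have hne : v (-1 : E) ≠ ⊤ := fun h => (by simp : (-1 : E) ≠ 0) ((hv0 (-1)).mp h)
    have : v (-1 : E) = v (-1) + v (-1) := by
      have := hvmul (-1) (-1); rw [neg_mul_neg, one_mul, h1] at this
      have h2 : v (-1 : E) + v (-1) = 0 := this.symm
      lift v (-1 : E) to ℤ using hne with a
      have : (a + a : ℤ) = 0 := by exact_mod_cast h2
      have : a = 0 := by omega
      simp [this]
    exact withtop_self_add_self hne this
  have hvneg : ∀ z : E, v (-z) = v z := by
    intro z
    have := hvmul (-1) z
    rw [neg_one_mul, hneg1, zero_add] at this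
    exact this
  -- v (1 + t) = 0
  have h1t : v (1 + t) = 0 := by
    have hge : (0 : WithTop ℤ) ≤ v (1 + t) := by
      have := hvadd 1 t
      rw [h1] at this
      refine le_trans ?_ this
      simp only [le_min_iff]
      exact ⟨le_refl _, le_trans (by norm_num) hsmall⟩
    have hle : v (1 + t) ≤ 0 := by
      have hmin : min (v (1 + t)) (v t) ≤ 0 := by
        have := hvadd (1 + t) (-t)
        rw [add_neg_cancel_right, h1, hvneg] at this
        exact this
      rcases min_le_iff.mp hmin with h' | h'
      · exact h'
      · exact absurd (le_trans hsmall h') (by norm_num)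
    exact le_antisymm hle hge
  have h1tne : (1 + t) ≠ 0 := by
    intro h
    rw [h, (hv0 0).mpr rfl] at h1t
    exact absurd h1t (by simp)
  -- v (1+t)⁻¹ = 0
  have hinv : v (1 + t)⁻¹ = 0 := by
    have := hvmul (1 + t) (1 + t)⁻¹
    rw [mul_inv_cancel₀ h1tne, h1, h1t, zero_add] at this
    exact this.symm
  -- v y₂ = v y₁
  have hvy2 : v (y₁ * (1 + t)⁻¹) = v y₁ := by
    rw [hvmul, hinv, add_zero]
  have hassoc : 1 + bar (x * x₁) + y * y₁ = 1 + t := by rw [ht]; ring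
  rw [hassoc]
  constructor
  · intro hy₁ne
    have hdiff : y₁ * (1 + t)⁻¹ - y₁ = -(y₁ * t) * (1 + t)⁻¹ := by
      field_simp
      ring
    rw [hdiff, hvmul, hinv, add_zero, hvneg, hvmul]
    have hvy₁ne : v y₁ ≠ ⊤ := fun h => hy₁ne ((hv0 y₁).mp h)
    lift v y₁ to ℤ using hvy₁ne with a
    rcases eq_or_ne (v t) ⊤ with h | h
    · rw [h]
      simp [WithTop.add_top]
    · lift v t to ℤ using h with b
      have hb : (1 : ℤ) ≤ b := by exact_mod_cast hsmall
      have : ((a : WithTop ℤ) + b) = ((a + b : ℤ) : WithTop ℤ) := by push_cast; ring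
      rw [this]
      exact_mod_cast (by omega : a < a + b)
  · intro m
    rw [hvy2]
end

section
/- Let V be an F̄_p-vector space with basis {f_n : n ∈ ℤ} and let T : V → V be the linear operator determined by T f₀ = f₋₁ + λ₀ f₁ and, for n ≠ 0, T f_n = c f_n + f_{n+δ(n)} where δ(n) = 1 if n > 0 and δ(n) = -1 if n < 0, with fixed constants λ₀, c ∈ F̄_p. Then for every nonzero polynomial P over F̄_p, the operator P(T) : V → V is injective. -/
/-!
Filter `V` by `V n = span {f_k : |k| < n}`. Then `T` maps `V n` into `V (n + 1)`, and the
coefficients of `T v` at `±(n + 1)` are those of `v` at `±n` (at `n = 0` only the `f₋₁` side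
survives, as `λ₀` may vanish), so `T` raises the exact filtration degree of every vector by one.
Hence `P(T)` raises it by `deg P`, and in particular kills no nonzero vector.
-/

open Polynomial

section StrictFiltration

variable {K V : Type*} [Field K] [AddCommGroup V] [Module K V] {T : Module.End K V}
  {F : ℕ → Submodule K V}

theorem pow_apply_mem_of_mapsTo (hmaps : ∀ n, ∀ v ∈ F n, T v ∈ F (n + 1)) {n : ℕ} {v : V}
    (hv : v ∈ F n) (k : ℕ) : (T ^ k) v ∈ F (n + k) := by
  induction k with
  | zero => simpa using hv
  | succ k ih => rw [pow_succ', Module.End.mul_apply]; exact hmaps _ _ ih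

theorem pow_apply_notMem_of_strictMapsTo (hmaps : ∀ n, ∀ v ∈ F n, T v ∈ F (n + 1))
    (hstrict : ∀ n, ∀ v ∈ F (n + 1), T v ∈ F (n + 1) → v ∈ F n) {n : ℕ} {v : V}
    (hv : v ∈ F (n + 1)) (hv' : v ∉ F n) (k : ℕ) : (T ^ k) v ∉ F (n + k) := by
  induction k with
  | zero => simpa using hv'
  | succ k ih =>
    have hk : (T ^ k) v ∈ F (n + k + 1) := by
      simpa [add_right_comm] using pow_apply_mem_of_mapsTo hmaps hv k
    rw [pow_succ', Module.End.mul_apply, ← add_assoc]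
    exact fun h ↦ ih (hstrict _ _ hk h)

theorem aeval_apply_notMem_of_strictMapsTo (hmono : Monotone F)
    (hmaps : ∀ n, ∀ v ∈ F n, T v ∈ F (n + 1))
    (hstrict : ∀ n, ∀ v ∈ F (n + 1), T v ∈ F (n + 1) → v ∈ F n) {P : K[X]} (hP : P ≠ 0)
    {n : ℕ} {v : V} (hv : v ∈ F (n + 1)) (hv' : v ∉ F n) :
    aeval T P v ∉ F (n + P.natDegree) := by
  set d := P.natDegree
  have hlower : ∑ i ∈ Finset.range d, P.coeff i • (T ^ i) v ∈ F (n + d) :=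
    Submodule.sum_mem _ fun i hi ↦ Submodule.smul_mem _ _ <|
      hmono (by rw [Finset.mem_range] at hi; omega) (pow_apply_mem_of_mapsTo hmaps hv i)
  have hsplit : aeval T P v =
      ∑ i ∈ Finset.range d, P.coeff i • (T ^ i) v + P.leadingCoeff • (T ^ d) v := by
    rw [aeval_eq_sum_range, Finset.sum_range_succ, coeff_natDegree]
    simp only [LinearMap.add_apply, LinearMap.sum_apply, LinearMap.smul_apply, d]
  intro h
  rw [hsplit, Submodule.add_mem_iff_right _ hlower,
    Submodule.smul_mem_iff _ (leadingCoeff_ne_zero.mpr hP)] at h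
  exact pow_apply_notMem_of_strictMapsTo hmaps hstrict hv hv' d h

theorem aeval_injective_of_strictMapsTo (hmono : Monotone F) (hbot : F 0 = ⊥)
    (hexh : ∀ v, ∃ n, v ∈ F n) (hmaps : ∀ n, ∀ v ∈ F n, T v ∈ F (n + 1))
    (hstrict : ∀ n, ∀ v ∈ F (n + 1), T v ∈ F (n + 1) → v ∈ F n) {P : K[X]} (hP : P ≠ 0) :
    Function.Injective (aeval T P) := by
  classical
  refine (injective_iff_map_eq_zero _).mpr fun v hPv ↦ by_contra fun hv ↦ ?_
  obtain ⟨n, hn⟩ : ∃ n, Nat.find (hexh v) = n + 1 :=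
    Nat.exists_eq_succ_of_ne_zero fun h0 ↦ hv <| by simpa [hbot, h0] using Nat.find_spec (hexh v)
  have hmin : v ∉ F n := Nat.find_min (hexh v) (by omega)
  exact aeval_apply_notMem_of_strictMapsTo hmono hmaps hstrict hP (hn ▸ Nat.find_spec (hexh v))
    hmin (hPv ▸ Submodule.zero_mem _)

end StrictFiltration

namespace Module.Basis

variable {K V : Type*} [Field K] [AddCommGroup V] [Module K V] (b : Basis ℤ K V)

def spanNatAbsLT (n : ℕ) : Submodule K V := Submodule.span K (b '' {k | k.natAbs < n})

theorem mem_spanNatAbsLT {n : ℕ} {v : V} :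
    v ∈ b.spanNatAbsLT n ↔ ∀ k, b.repr v k ≠ 0 → k.natAbs < n := by
  simp [spanNatAbsLT, mem_span_image, Set.subset_def]

theorem spanNatAbsLT_mono : Monotone b.spanNatAbsLT := fun _ _ h ↦
  Submodule.span_mono <| Set.image_mono fun _ hk ↦ lt_of_lt_of_le hk h

theorem spanNatAbsLT_zero : b.spanNatAbsLT 0 = ⊥ := by
  simp [spanNatAbsLT]

theorem exists_mem_spanNatAbsLT (v : V) : ∃ n, v ∈ b.spanNatAbsLT n :=
  ⟨(b.repr v).support.sup Int.natAbs + 1, b.mem_spanNatAbsLT.mpr fun _ hk ↦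
    Nat.lt_succ_of_le (Finset.le_sup (f := Int.natAbs) (Finsupp.mem_support_iff.mpr hk))⟩

structure IsHeckeOperator (T : Module.End K V) (lam0 c : K) : Prop where
  apply_zero : T (b 0) = b (-1) + lam0 • b 1
  apply_pos : ∀ n, 0 < n → T (b n) = c • b n + b (n + 1)
  apply_neg : ∀ n, n < 0 → T (b n) = c • b n + b (n - 1)

variable {T : Module.End K V} {lam0 c : K}

theorem natAbs_le_of_repr_apply_basis_ne_zero (hT : b.IsHeckeOperator T lam0 c) {k j : ℤ}
    (h : b.repr (T (b k)) j ≠ 0) : j.natAbs ≤ k.natAbs + 1 := by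
  rcases lt_trichotomy k 0 with hk | rfl | hk <;>
    simp only [hT.apply_zero, hT.apply_pos, hT.apply_neg, *, map_add, map_smul, repr_self,
      Finsupp.add_apply, Finsupp.smul_apply, Finsupp.single_apply] at h <;>
    split_ifs at h <;> first | omega | simp_all

theorem repr_apply_basis_neg_succ (hT : b.IsHeckeOperator T lam0 c) {k : ℤ} {n : ℕ}
    (hk : k.natAbs ≤ n) : b.repr (T (b k)) (-(n + 1)) = b.repr (b k) (-n) := by
  rcases lt_trichotomy k 0 with hk0 | rfl | hk0 <;>
    simp only [hT.apply_zero, hT.apply_pos, hT.apply_neg, *, map_add, map_smul, repr_self,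
      Finsupp.add_apply, Finsupp.smul_apply, Finsupp.single_apply] <;>
    split_ifs <;> first | omega | simp

theorem repr_apply_basis_succ (hT : b.IsHeckeOperator T lam0 c) {k : ℤ} {n : ℕ} (hn : n ≠ 0)
    (hk : k.natAbs ≤ n) : b.repr (T (b k)) (n + 1) = b.repr (b k) n := by
  rcases lt_trichotomy k 0 with hk0 | rfl | hk0 <;>
    simp only [hT.apply_zero, hT.apply_pos, hT.apply_neg, *, map_add, map_smul, repr_self,
      Finsupp.add_apply, Finsupp.smul_apply, Finsupp.single_apply] <;>
    split_ifs <;> first | omega | simp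

theorem apply_mem_spanNatAbsLT_succ (hT : b.IsHeckeOperator T lam0 c) (n : ℕ) :
    ∀ v ∈ b.spanNatAbsLT n, T v ∈ b.spanNatAbsLT (n + 1) := by
  have : b.spanNatAbsLT n ≤ (b.spanNatAbsLT (n + 1)).comap T := by
    refine Submodule.span_le.mpr ?_
    rintro _ ⟨k, hk, rfl⟩
    refine b.mem_spanNatAbsLT.mpr fun j hj ↦ ?_
    have := b.natAbs_le_of_repr_apply_basis_ne_zero hT hj
    simp only [Set.mem_ofPred_eq] at hk
    omega
  exact fun v hv ↦ this hv

theorem repr_apply_neg_succ (hT : b.IsHeckeOperator T lam0 c) {n : ℕ} {v : V}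
    (hv : v ∈ b.spanNatAbsLT (n + 1)) : b.repr (T v) (-(n + 1)) = b.repr v (-n) :=
  LinearMap.eqOn_span' (f := b.coord (-(n + 1)) ∘ₗ T) (g := b.coord (-n))
    (by rintro _ ⟨k, hk, rfl⟩; exact b.repr_apply_basis_neg_succ hT (Nat.lt_succ_iff.mp hk)) hv

theorem repr_apply_succ (hT : b.IsHeckeOperator T lam0 c) {n : ℕ} (hn : n ≠ 0) {v : V}
    (hv : v ∈ b.spanNatAbsLT (n + 1)) : b.repr (T v) (n + 1) = b.repr v n :=
  LinearMap.eqOn_span' (f := b.coord (n + 1) ∘ₗ T) (g := b.coord n)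
    (by rintro _ ⟨k, hk, rfl⟩; exact b.repr_apply_basis_succ hT hn (Nat.lt_succ_iff.mp hk)) hv

theorem mem_spanNatAbsLT_of_apply_mem (hT : b.IsHeckeOperator T lam0 c) (n : ℕ) :
    ∀ v ∈ b.spanNatAbsLT (n + 1), T v ∈ b.spanNatAbsLT (n + 1) → v ∈ b.spanNatAbsLT n := by
  intro v hv hTv
  rw [mem_spanNatAbsLT] at hTv ⊢
  have hneg : b.repr v (-n) = 0 := by
    by_contra h
    have := hTv _ (b.repr_apply_neg_succ hT hv ▸ h)
    omega
  have hpos : n ≠ 0 → b.repr v n = 0 := fun hn ↦ by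
    by_contra h
    have := hTv _ (b.repr_apply_succ hT hn hv ▸ h)
    omega
  intro k hk
  have := b.mem_spanNatAbsLT.mp hv k hk
  by_contra hkn
  obtain rfl | rfl : k = n ∨ k = -n := by omega
  · exact hk (if hn : n = 0 then by simpa [hn] using hneg else hpos hn)
  · exact hk hneg

end Module.Basis

theorem hecke_polynomial_injective_general
    {F : Type*} [Field F]
    {V : Type*} [AddCommGroup V] [Module F V]
    (b : Module.Basis ℤ F V) (T : Module.End F V) (lam0 c : F)
    (hT0 : T (b 0) = b (-1) + lam0 • b 1)
    (hTpos : ∀ n : ℤ, 0 < n → T (b n) = c • b n + b (n + 1))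
    (hTneg : ∀ n : ℤ, n < 0 → T (b n) = c • b n + b (n - 1)) :
    ∀ P : Polynomial F, P ≠ 0 → Function.Injective ⇑(Polynomial.aeval T P) := by
  have hT : b.IsHeckeOperator T lam0 c := ⟨hT0, hTpos, hTneg⟩
  exact fun P hP ↦ aeval_injective_of_strictMapsTo b.spanNatAbsLT_mono b.spanNatAbsLT_zero
    b.exists_mem_spanNatAbsLT (b.apply_mem_spanNatAbsLT_succ hT)
    (b.mem_spanNatAbsLT_of_apply_mem hT) hP

/-- let `V` be an `F̄_p`-vector space with basis `{f_n : n ∈ ℤ}` and `T` the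
linear operator with `T f₀ = f₋₁ + λ₀ f₁` and `T f_n = c f_n + f_{n+δ(n)}` for `n ≠ 0`
(`δ(n) = ±1` according to the sign of `n`). Then for every nonzero polynomial `P`,
the operator `P(T)` is injective. -/
theorem hecke_polynomial_injective
    (p : ℕ) [Fact p.Prime] {F : Type*} [Field F] [CharP F p] [IsAlgClosed F]
    {V : Type*} [AddCommGroup V] [Module F V]
    (b : Module.Basis ℤ F V) (T : Module.End F V) (lam0 c : F)
    (hT0 : T (b 0) = b (-1) + lam0 • b 1)
    (hTpos : ∀ n : ℤ, 0 < n → T (b n) = c • b n + b (n + 1))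
    (hTneg : ∀ n : ℤ, n < 0 → T (b n) = c • b n + b (n - 1)) :
    ∀ P : Polynomial F, P ≠ 0 → Function.Injective ⇑(Polynomial.aeval T P) :=
  hecke_polynomial_injective_general b T lam0 c hT0 hTpos hTneg
end

section
/- Let V be an F̄_p-vector space with basis {f_n : n ∈ ℤ} and T the linear operator with T f₀ = f₋₁ + λ₀ f₁ and T f_n = c f_n + f_{n+δ(n)} for n ≠ 0 (δ(n) = sign of n). Then for any λ ∈ F̄_p, every f_n is congruent modulo (T-λ)V to a linear combination of f₀ and f₁, and f₀ - c'·f₁ ∉ (T-λ)V for every c' ∈ F̄_p. Hence the image of span{f_n} in V/(T-λ)V is exactly 2-dimensional, spanned by the images of f₀ and f₁. -/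
section Aux

variable {F : Type*} [Field F] {V : Type*} [AddCommGroup V] [Module F V]
  (b : Module.Basis ℤ F V) (T : Module.End F V) (lam0 c lam : F)

lemma hecke_coord_bb (m n : ℤ) : b.coord m (b n) = if n = m then 1 else 0 := by
  simp [Module.Basis.coord_apply, Finsupp.single_apply]

lemma hecke_key
    (hT0 : T (b 0) = b (-1) + lam0 • b 1)
    (hTpos : ∀ n : ℤ, 0 < n → T (b n) = c • b n + b (n + 1))
    (hTneg : ∀ n : ℤ, n < 0 → T (b n) = c • b n + b (n - 1))
    (x y : F) (v : V)
    (hv : (T - lam • (1 : Module.End F V)) v = x • b 0 + y • b 1) :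
    x = 0 ∧ y = 0 := by
  set a : ℤ → F := fun n => b.repr v n with ha
  have simpset : True := trivial
  -- functional equations
  have hphi0 : (b.coord 0) ∘ₗ (T : V →ₗ[F] V) = 0 := by
    apply b.ext
    intro n
    simp only [LinearMap.comp_apply, LinearMap.zero_apply]
    rcases lt_trichotomy n 0 with h | h | h
    · rw [hTneg n h]
      simp only [map_add, map_smul, hecke_coord_bb, smul_eq_mul]
      rw [if_neg (show ¬(n = 0) by omega), if_neg (show ¬(n - 1 = 0) by omega)]
      ring
    · subst h
      rw [hT0]
      simp only [map_add, map_smul, hecke_coord_bb, smul_eq_mul]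
      rw [if_neg (show ¬((-1 : ℤ) = 0) by omega), if_neg (show ¬((1 : ℤ) = 0) by omega)]
      ring
    · rw [hTpos n h]
      simp only [map_add, map_smul, hecke_coord_bb, smul_eq_mul]
      rw [if_neg (show ¬(n = 0) by omega), if_neg (show ¬(n + 1 = 0) by omega)]
      ring
  have hphineg : ∀ m : ℤ, m ≤ -1 →
      (b.coord m) ∘ₗ (T : V →ₗ[F] V) = c • b.coord m + b.coord (m + 1) := by
    intro m hm
    apply b.ext
    intro n
    simp only [LinearMap.comp_apply, LinearMap.add_apply, LinearMap.smul_apply]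
    rcases lt_trichotomy n 0 with h | h | h
    · rw [hTneg n h]
      simp only [map_add, map_smul, hecke_coord_bb, smul_eq_mul,
        show (n - 1 = m) ↔ (n = m + 1) from by omega]
    · subst h
      rw [hT0]
      simp only [map_add, map_smul, hecke_coord_bb, smul_eq_mul,
        show ((-1 : ℤ) = m) ↔ ((0 : ℤ) = m + 1) from by omega]
      rw [if_neg (show ¬((1 : ℤ) = m) by omega), if_neg (show ¬((0 : ℤ) = m) by omega)]
      ring
    · rw [hTpos n h]
      simp only [map_add, map_smul, hecke_coord_bb, smul_eq_mul]
      rw [if_neg (show ¬(n = m) by omega), if_neg (show ¬(n + 1 = m) by omega),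
        if_neg (show ¬(n = m + 1) by omega)]
  have hphipos : ∀ m : ℤ, 2 ≤ m →
      (b.coord m) ∘ₗ (T : V →ₗ[F] V) = c • b.coord m + b.coord (m - 1) := by
    intro m hm
    apply b.ext
    intro n
    simp only [LinearMap.comp_apply, LinearMap.add_apply, LinearMap.smul_apply]
    rcases lt_trichotomy n 0 with h | h | h
    · rw [hTneg n h]
      simp only [map_add, map_smul, hecke_coord_bb, smul_eq_mul]
      rw [if_neg (show ¬(n = m) by omega), if_neg (show ¬(n - 1 = m) by omega),
        if_neg (show ¬(n = m - 1) by omega)]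
    · subst h
      rw [hT0]
      simp only [map_add, map_smul, hecke_coord_bb, smul_eq_mul]
      rw [if_neg (show ¬((-1 : ℤ) = m) by omega), if_neg (show ¬((1 : ℤ) = m) by omega),
        if_neg (show ¬((0 : ℤ) = m) by omega), if_neg (show ¬((0 : ℤ) = m - 1) by omega)]
      ring
    · rw [hTpos n h]
      simp only [map_add, map_smul, hecke_coord_bb, smul_eq_mul,
        show (n + 1 = m) ↔ (n = m - 1) from by omega]
  have hphi1 : (b.coord 1) ∘ₗ (T : V →ₗ[F] V) = c • b.coord 1 + lam0 • b.coord 0 := by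
    apply b.ext
    intro n
    simp only [LinearMap.comp_apply, LinearMap.add_apply, LinearMap.smul_apply]
    rcases lt_trichotomy n 0 with h | h | h
    · rw [hTneg n h]
      simp only [map_add, map_smul, hecke_coord_bb, smul_eq_mul]
      rw [if_neg (show ¬(n = 1) by omega), if_neg (show ¬(n - 1 = 1) by omega),
        if_neg (show ¬(n = 0) by omega)]
      ring
    · subst h
      rw [hT0]
      simp only [map_add, map_smul, hecke_coord_bb, smul_eq_mul]
      norm_num
    · rw [hTpos n h]
      simp only [map_add, map_smul, hecke_coord_bb, smul_eq_mul]
      rw [if_neg (show ¬(n + 1 = 1) by omega), if_neg (show ¬(n = 0) by omega)]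
      ring
  -- scalar equations: apply b.coord m to hv
  have hcm : ∀ m : ℤ, b.coord m ((T - lam • (1 : Module.End F V)) v)
      = b.coord m (T v) - lam * a m := by
    intro m
    simp only [LinearMap.sub_apply, LinearMap.smul_apply, Module.End.one_apply, map_sub,
      map_smul, smul_eq_mul, ha, Module.Basis.coord_apply]
  have hrhs : ∀ m : ℤ, b.coord m (x • b 0 + y • b 1)
      = x * (if (0:ℤ) = m then 1 else 0) + y * (if (1:ℤ) = m then 1 else 0) := by
    intro m
    simp only [map_add, map_smul, hecke_coord_bb, smul_eq_mul]
  have eq0 : -(lam * a 0) = x := by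
    have h := congrArg (b.coord 0) hv
    rw [hcm, hrhs] at h
    have h0 : b.coord 0 (T v) = 0 := by
      have := congrFun (congrArg DFunLike.coe hphi0) v
      simpa using this
    rw [h0] at h
    norm_num at h
    linear_combination h
  have eqneg : ∀ m : ℤ, m ≤ -1 → (c - lam) * a m + a (m + 1) = 0 := by
    intro m hm
    have h := congrArg (b.coord m) hv
    rw [hcm, hrhs] at h
    have h0 : b.coord m (T v) = c * a m + a (m + 1) := by
      have := congrFun (congrArg DFunLike.coe (hphineg m hm)) v
      simpa only [LinearMap.comp_apply, LinearMap.add_apply, LinearMap.smul_apply,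
        Module.Basis.coord_apply, smul_eq_mul, ha] using this
    rw [h0] at h
    have h1 : (0:ℤ) ≠ m := by omega
    have h2 : (1:ℤ) ≠ m := by omega
    rw [if_neg h1, if_neg h2] at h
    linear_combination h
  have eqpos : ∀ m : ℤ, 2 ≤ m → (c - lam) * a m + a (m - 1) = 0 := by
    intro m hm
    have h := congrArg (b.coord m) hv
    rw [hcm, hrhs] at h
    have h0 : b.coord m (T v) = c * a m + a (m - 1) := by
      have := congrFun (congrArg DFunLike.coe (hphipos m hm)) v
      simpa only [LinearMap.comp_apply, LinearMap.add_apply, LinearMap.smul_apply,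
        Module.Basis.coord_apply, smul_eq_mul, ha] using this
    rw [h0] at h
    have h1 : (0:ℤ) ≠ m := by omega
    have h2 : (1:ℤ) ≠ m := by omega
    rw [if_neg h1, if_neg h2] at h
    linear_combination h
  have eq1 : (c - lam) * a 1 + lam0 * a 0 = y := by
    have h := congrArg (b.coord 1) hv
    rw [hcm, hrhs] at h
    have h0 : b.coord 1 (T v) = c * a 1 + lam0 * a 0 := by
      have := congrFun (congrArg DFunLike.coe hphi1) v
      simpa only [LinearMap.comp_apply, LinearMap.add_apply, LinearMap.smul_apply,
        Module.Basis.coord_apply, smul_eq_mul, ha] using this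
    rw [h0] at h
    norm_num at h
    linear_combination h
  -- a 0 = 0
  have ha0 : a 0 = 0 := by
    by_contra h0
    have hall : ∀ k : ℕ, a (-(k : ℤ)) ≠ 0 := by
      intro k
      induction k with
      | zero => simpa using h0
      | succ k ih =>
        have hk : (-((k : ℤ) + 1)) ≤ -1 := by omega
        have he := eqneg (-((k : ℤ) + 1)) hk
        have hc : (((k + 1 : ℕ)) : ℤ) = (k : ℤ) + 1 := by push_cast; ring
        rw [hc]
        intro hz
        apply ih
        have harg : (-((k : ℤ) + 1)) + 1 = -(k : ℤ) := by ring
        rw [hz, harg] at he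
        linear_combination he
    have hinj : Function.Injective (fun k : ℕ => (-(k : ℤ))) := by
      intro k1 k2 h
      simpa using h
    have hmem : ∀ k : ℕ, (-(k : ℤ)) ∈ ((b.repr v).support : Set ℤ) := by
      intro k
      exact Finsupp.mem_support_iff.mpr (hall k)
    exact ((b.repr v).support.finite_toSet).not_infinite
      (Set.infinite_of_injective_forall_mem hinj hmem)
  -- a 1 = 0
  have ha1 : a 1 = 0 := by
    by_contra h1
    have hall : ∀ k : ℕ, a (1 + (k : ℤ)) ≠ 0 := by
      intro k
      induction k with
      | zero => simpa using h1
      | succ k ih =>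
        have hk : (2 : ℤ) ≤ 1 + ((k : ℤ) + 1) := by omega
        have he := eqpos (1 + ((k : ℤ) + 1)) hk
        have hc : (((k + 1 : ℕ)) : ℤ) = (k : ℤ) + 1 := by push_cast; ring
        rw [hc]
        intro hz
        apply ih
        have harg : (1 + ((k : ℤ) + 1)) - 1 = 1 + (k : ℤ) := by ring
        rw [hz, harg] at he
        linear_combination he
    have hinj : Function.Injective (fun k : ℕ => (1 + (k : ℤ))) := by
      intro k1 k2 h
      simpa using h
    have hmem : ∀ k : ℕ, (1 + (k : ℤ)) ∈ ((b.repr v).support : Set ℤ) := by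
      intro k
      exact Finsupp.mem_support_iff.mpr (hall k)
    exact ((b.repr v).support.finite_toSet).not_infinite
      (Set.infinite_of_injective_forall_mem hinj hmem)
  constructor
  · rw [← eq0, ha0]; ring
  · rw [← eq1, ha0, ha1]; ring

end Aux

/-- in the abstract Hecke-module setting (`V` with basis `{f_n}_{n∈ℤ}`,
`T f₀ = f₋₁ + λ₀ f₁`, `T f_n = c f_n + f_{n+δ(n)}` for `n ≠ 0`), for any `λ`:
every `f_n` is congruent modulo `(T-λ)V` to a linear combination of `f₀` and `f₁`,
`f₀ - c'·f₁ ∉ (T-λ)V` for every `c'`, and hence the quotient `V/(T-λ)V` is exactly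
2-dimensional, spanned by the images of `f₀` and `f₁`. -/
theorem hecke_quotient_two_dimensional
    (p : ℕ) [Fact p.Prime] {F : Type*} [Field F] [CharP F p] [IsAlgClosed F]
    {V : Type*} [AddCommGroup V] [Module F V]
    (b : Module.Basis ℤ F V) (T : Module.End F V) (lam0 c lam : F)
    (hT0 : T (b 0) = b (-1) + lam0 • b 1)
    (hTpos : ∀ n : ℤ, 0 < n → T (b n) = c • b n + b (n + 1))
    (hTneg : ∀ n : ℤ, n < 0 → T (b n) = c • b n + b (n - 1)) :
    (∀ n : ℤ, b n ∈
        LinearMap.range (T - lam • (1 : Module.End F V)) ⊔ Submodule.span F {b 0, b 1}) ∧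
    (∀ c' : F, b 0 - c' • b 1 ∉ LinearMap.range (T - lam • (1 : Module.End F V))) ∧
    Submodule.span F
        {(Submodule.Quotient.mk (b 0) :
            V ⧸ LinearMap.range (T - lam • (1 : Module.End F V))),
          Submodule.Quotient.mk (b 1)} = ⊤ ∧
    Module.finrank F (V ⧸ LinearMap.range (T - lam • (1 : Module.End F V))) = 2 := by
  set R := LinearMap.range (T - lam • (1 : Module.End F V)) with hR
  set S := R ⊔ Submodule.span F {b 0, b 1} with hS
  -- Part 1
  have h1 : ∀ n : ℤ, b n ∈ S := by
    have hb0 : b 0 ∈ S := Submodule.mem_sup_right (Submodule.subset_span (by simp))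
    have hb1 : b 1 ∈ S := Submodule.mem_sup_right (Submodule.subset_span (by simp))
    intro n
    induction n using Int.induction_on with
    | zero => exact hb0
    | succ i ih =>
      rcases Nat.eq_zero_or_pos i with h | h
      · subst h; simpa using hb1
      · have hi : (0 : ℤ) < (i : ℤ) := by exact_mod_cast h
        have hrw : b ((i : ℤ) + 1) = (T - lam • (1 : Module.End F V)) (b i)
            - (c - lam) • b i := by
          rw [LinearMap.sub_apply, hTpos i hi]
          simp only [LinearMap.smul_apply, Module.End.one_apply, sub_smul]
          abel
        rw [hrw]
        exact Submodule.sub_mem _ (Submodule.mem_sup_left ⟨b i, rfl⟩)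
          (Submodule.smul_mem _ _ ih)
    | pred i ih =>
      rcases Nat.eq_zero_or_pos i with h | h
      · subst h
        have hrw : b (-(0 : ℕ) - 1 : ℤ) = (T - lam • (1 : Module.End F V)) (b 0)
            + lam • b 0 - lam0 • b 1 := by
          rw [LinearMap.sub_apply, hT0]
          simp only [LinearMap.smul_apply, Module.End.one_apply]
          norm_num
          try abel
        rw [hrw]
        exact Submodule.sub_mem _
          (Submodule.add_mem _ (Submodule.mem_sup_left ⟨b 0, rfl⟩)
            (Submodule.smul_mem _ _ hb0))
          (Submodule.smul_mem _ _ hb1)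
      · have hi : (-(i : ℤ)) < 0 := by omega
        have hrw : b (-(i : ℤ) - 1) = (T - lam • (1 : Module.End F V)) (b (-(i : ℤ)))
            - (c - lam) • b (-(i : ℤ)) := by
          rw [LinearMap.sub_apply, hTneg _ hi]
          simp only [LinearMap.smul_apply, Module.End.one_apply, sub_smul]
          abel
        rw [hrw]
        exact Submodule.sub_mem _ (Submodule.mem_sup_left ⟨b (-(i : ℤ)), rfl⟩)
          (Submodule.smul_mem _ _ ih)
  -- Part 2
  have h2 : ∀ c' : F, b 0 - c' • b 1 ∉ R := by
    intro c' hmem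
    obtain ⟨v, hv⟩ := hmem
    have hv' : (T - lam • (1 : Module.End F V)) v = (1 : F) • b 0 + (-c') • b 1 := by
      rw [hv]; module
    have := (hecke_key b T lam0 c lam hT0 hTpos hTneg 1 (-c') v hv').1
    exact one_ne_zero this
  refine ⟨h1, h2, ?_⟩
  -- Part 3
  have h3 : Submodule.span F
      {(Submodule.Quotient.mk (b 0) : V ⧸ R), Submodule.Quotient.mk (b 1)} = ⊤ := by
    have himg : ({(Submodule.Quotient.mk (b 0) : V ⧸ R), Submodule.Quotient.mk (b 1)} :
        Set (V ⧸ R)) = R.mkQ '' {b 0, b 1} := by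
      simp [Set.image_pair]
    rw [himg, ← Submodule.map_span]
    rw [eq_top_iff]
    intro q _
    obtain ⟨v, rfl⟩ := R.mkQ_surjective q
    have hvS : v ∈ S := by
      have : v ∈ (⊤ : Submodule F V) := trivial
      rw [← b.span_eq] at this
      refine Submodule.span_le.mpr ?_ this
      rintro _ ⟨n, rfl⟩
      exact h1 n
    rw [hS] at hvS
    obtain ⟨r, hr, w, hw, rfl⟩ := Submodule.mem_sup.mp hvS
    rw [map_add]
    have hr0 : R.mkQ r = 0 := by
      rw [Submodule.mkQ_apply, Submodule.Quotient.mk_eq_zero]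
      exact hr
    rw [hr0, zero_add]
    exact Submodule.mem_map_of_mem hw
  refine ⟨h3, ?_⟩
  -- Part 4
  have hli : LinearIndependent F
      ![(Submodule.Quotient.mk (b 0) : V ⧸ R), Submodule.Quotient.mk (b 1)] := by
    rw [LinearIndependent.pair_iff]
    intro s t hst
    have hmem : s • b 0 + t • b 1 ∈ R := by
      rw [← Submodule.Quotient.mk_eq_zero R]
      rw [Submodule.Quotient.mk_add, Submodule.Quotient.mk_smul, Submodule.Quotient.mk_smul]
      exact hst
    obtain ⟨v, hv⟩ := hmem
    exact hecke_key b T lam0 c lam hT0 hTpos hTneg s t v hv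
  have hrange : Set.range
      ![(Submodule.Quotient.mk (b 0) : V ⧸ R), Submodule.Quotient.mk (b 1)] =
      {(Submodule.Quotient.mk (b 0) : V ⧸ R), Submodule.Quotient.mk (b 1)} := by
    ext z
    simp only [Set.mem_range, Fin.exists_fin_two, Matrix.cons_val_zero, Matrix.cons_val_one,
      Matrix.head_cons, Set.mem_insert_iff, Set.mem_singleton_iff]
    tauto
  let B : Module.Basis (Fin 2) F (V ⧸ R) := Module.Basis.mk hli (by rw [hrange, h3])
  rw [Module.finrank_eq_card_basis B]
  simp
end

section
/- In the abstract Hecke module setting, suppose T = T⁻ + T⁺ on each graded piece, where T⁻ : R_n → R_{n-1} is surjective and T⁺ : R_n → R_n ⊕ R_{n+1}, for a grading V = ⊕_{n≥0} R_n. Then for any polynomial P of degree ≥ 1 and any k ≥ 0: for each f ∈ ⊕_{n≥k} R_n there exists f' ∈ ⊕_{n≥k+1} R_n with f - f' ∈ P(T)(⊕_{n≥k+1} R_n). -/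
/-- abstract reduction lemma: let `V = ⊕_{n≥0} R_n` be graded,
`T = T⁻ + T⁺` with `T⁻ : R_n ↠ R_{n-1}` surjective for `n ≥ 1` and
`T⁺ : R_n → R_n ⊕ R_{n+1}`. Then for any polynomial `P` of degree `≥ 1` and any `k₀ ≥ 0`:
for each `f ∈ ⊕_{n ≥ k₀} R_n` there is `f' ∈ ⊕_{n ≥ k₀+1} R_n` with
`f - f' ∈ P(T)(⊕_{n ≥ k₀+1} R_n)`. -/
theorem reduction_lemma
    {k V : Type*} [Field k] [AddCommGroup V] [Module k V]
    (R : ℕ → Submodule k V)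
    (hgrad : (⨆ n, R n) = ⊤)
    (T Tm Tp : V →ₗ[k] V)
    (hT : T = Tm + Tp)
    (hTm : ∀ n : ℕ, 1 ≤ n → Submodule.map Tm (R n) = R (n - 1))
    (hTp : ∀ n : ℕ, Submodule.map Tp (R n) ≤ R n ⊔ R (n + 1)) :
    ∀ P : Polynomial k, 1 ≤ P.degree → ∀ k₀ : ℕ,
      ∀ f ∈ (⨆ n, ⨆ (_ : k₀ ≤ n), R n),
        ∃ f' ∈ (⨆ n, ⨆ (_ : k₀ + 1 ≤ n), R n),
          f - f' ∈ Submodule.map (Polynomial.aeval (T : Module.End k V) P)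
              (⨆ n, ⨆ (_ : k₀ + 1 ≤ n), R n) := by
  intro P hP k₀ f hf
  set W : ℕ → Submodule k V := fun m => ⨆ n, ⨆ (_ : m ≤ n), R n with hWdef
  have hRW : ∀ {m n : ℕ}, m ≤ n → R n ≤ W m := fun {m n} h =>
    le_iSup_of_le n (le_iSup_of_le h le_rfl)
  have hWle : ∀ m, W (m + 1) ≤ W m := by
    intro m
    refine iSup_le fun n => iSup_le fun hn => hRW (by omega)
  -- T maps W (m+1) into W m
  have hTW : ∀ m x, x ∈ W (m + 1) → T x ∈ W m := by
    intro m x hx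
    have : Submodule.map T (W (m + 1)) ≤ W m := by
      rw [hWdef]
      simp only [Submodule.map_iSup]
      refine iSup_le fun n => iSup_le fun hn => ?_
      rintro y ⟨z, hz, rfl⟩
      rw [hT]
      simp only [LinearMap.add_apply]
      refine add_mem ?_ ?_
      · have h1 : Tm z ∈ Submodule.map Tm (R n) := Submodule.mem_map_of_mem hz
        rw [hTm n (by omega)] at h1
        exact hRW (by omega) h1
      · have h2 : Tp z ∈ Submodule.map Tp (R n) := Submodule.mem_map_of_mem hz
        have h3 := hTp n h2
        exact (sup_le (hRW (by omega)) (hRW (by omega))) h3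
    exact this (Submodule.mem_map_of_mem hx)
  -- key lemma
  have key : ∀ d m : ℕ, ∀ x ∈ R m, ∃ g ∈ R (m + d),
      ((T ^ d : Module.End k V) g - x ∈ W (m + 1)) ∧
      ∀ i < d, (T ^ i : Module.End k V) g ∈ W (m + 1) := by
    intro d
    induction d with
    | zero =>
      intro m x hx
      exact ⟨x, by simpa using hx, by simp, fun i hi => absurd hi (by omega)⟩
    | succ d ih =>
      intro m x hx
      have hsurj := hTm (m + 1) (by omega)
      have hx' : x ∈ Submodule.map Tm (R (m + 1)) := by
        rw [hsurj]; simpa using hx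
      obtain ⟨h, hh, hTmh⟩ := hx'
      obtain ⟨g, hg, hdg, hig⟩ := ih (m + 1) h hh
      have hg' : g ∈ R (m + (d + 1)) := by
        have : m + 1 + d = m + (d + 1) := by omega
        rwa [this] at hg
      refine ⟨g, hg', ?_, ?_⟩
      · -- T^(d+1) g - x ∈ W (m+1)
        have heq : (T ^ (d + 1) : Module.End k V) g - x
            = T ((T ^ d : Module.End k V) g - h) + Tp h := by
          rw [pow_succ']
          have : (T * (T ^ d) : Module.End k V) g = T ((T ^ d : Module.End k V) g) := rfl
          rw [this, map_sub, hT]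
          simp only [LinearMap.add_apply]
          rw [hTmh]
          abel
        rw [heq]
        refine add_mem ?_ ?_
        · exact hTW (m + 1) _ hdg
        · have h2 : Tp h ∈ Submodule.map Tp (R (m + 1)) := Submodule.mem_map_of_mem hh
          exact (sup_le (hRW (by omega)) (hRW (by omega))) (hTp (m + 1) h2)
      · intro i hi
        rcases Nat.lt_succ_iff_lt_or_eq.mp hi with hlt | rfl
        · exact hWle (m + 1) (hig i hlt)
        · have : (T ^ i : Module.End k V) g
              = ((T ^ i : Module.End k V) g - h) + h := by abel
          rw [this]
          exact add_mem (hWle (m + 1) hdg) (hRW (le_refl (m + 1)) hh)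
  -- reduce to a submodule inequality
  have hPne : P ≠ 0 := fun h => by simp [h] at hP
  have hdeg : 1 ≤ P.natDegree := by
    have := Polynomial.natDegree_eq_of_degree_eq_some (Polynomial.degree_eq_natDegree hPne) |>.symm
    have h2 : (1 : WithBot ℕ) ≤ (P.natDegree : WithBot ℕ) := by
      rw [← Polynomial.degree_eq_natDegree hPne]; exact hP
    exact_mod_cast h2
  set d := P.natDegree with hd
  set c := P.leadingCoeff with hc
  have hcne : c ≠ 0 := Polynomial.leadingCoeff_ne_zero.mpr hPne
  have main : W k₀ ≤ W (k₀ + 1) ⊔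
      Submodule.map (Polynomial.aeval (T : Module.End k V) P) (W (k₀ + 1)) := by
    refine iSup_le fun n => iSup_le fun hn => ?_
    rcases Nat.lt_or_ge n (k₀ + 1) with hlt | hge
    · -- n = k₀
      have hn' : n = k₀ := by omega
      subst hn'
      intro x hx
      obtain ⟨g, hg, hdg, hig⟩ := key d n x hx
      set g' : V := c⁻¹ • g with hg'def
      have hg'mem : g' ∈ W (n + 1) :=
        Submodule.smul_mem _ _ (hRW (by omega) hg)
      -- compute aeval applied to g'
      have hcd : P.coeff d = c := by rw [hd, Polynomial.coeff_natDegree, ← hc]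
      have haeval : (Polynomial.aeval (T : Module.End k V) P) g'
          = (T ^ d : Module.End k V) g
            + ∑ i ∈ Finset.range d, c⁻¹ • (P.coeff i • (T ^ i : Module.End k V) g) := by
        rw [Polynomial.aeval_eq_sum_range]
        rw [LinearMap.coe_sum, Finset.sum_apply]
        simp only [LinearMap.smul_apply, hg'def, map_smul]
        rw [← hd, Finset.sum_range_succ, hcd, smul_smul c⁻¹ c,
          inv_mul_cancel₀ hcne, one_smul, add_comm]
      have hw : (∑ i ∈ Finset.range d, c⁻¹ • (P.coeff i • (T ^ i : Module.End k V) g))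
          ∈ W (n + 1) := by
        refine Submodule.sum_mem _ fun i hi => ?_
        exact Submodule.smul_mem _ _ (Submodule.smul_mem _ _ (hig i (Finset.mem_range.mp hi)))
      -- x = (stuff in W (n+1)) + aeval P g'
      have hsplit : x = (-(((T ^ d : Module.End k V) g - x))
             - (∑ i ∈ Finset.range d, c⁻¹ • (P.coeff i • (T ^ i : Module.End k V) g)))
          + (Polynomial.aeval (T : Module.End k V) P) g' := by
        rw [haeval]; abel
      rw [hsplit]
      refine Submodule.add_mem_sup ?_ ?_
      · exact sub_mem (neg_mem hdg) hw
      · exact Submodule.mem_map_of_mem hg'mem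
    · intro x hx
      exact Submodule.mem_sup_left (hRW hge hx)
  -- conclude
  have hf' := main hf
  rw [Submodule.mem_sup] at hf'
  obtain ⟨a, ha, b, hb, hab⟩ := hf'
  refine ⟨a, ha, ?_⟩
  have : f - a = b := by rw [← hab]; abel
  rw [this]
  exact hb
end

section
/- Let σ be a weight of the maximal compact K of U(2,1)(E/F) with I_{1,K}-fixed line spanned by v₀. Then the set {u β_K v₀ : u ∈ N_{n_K}/N_{n_K+1}} spans the underlying space of σ; equivalently, σ is spanned by the translates of β_K v₀ under coset representatives of N_{n_K}/N_{n_K+1}. -/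
/-- let `σ` be a weight of the maximal compact `K` of `U(2,1)(E/F)` with
`I_{1,K}`-fixed line spanned by `v₀`. Then the set `{u β_K v₀ : u ∈ N_{n_K}/N_{n_K+1}}`
spans the underlying space of `σ`.

The setting is abstracted: `K` a group, `σ` an irreducible representation of `K`,
`I1 = I_{1,K}`, `IK = I_K`, `R` a set of coset representatives of `N_{n_K}/N_{n_K+1}`,
`βK` the Weyl element; the key inputs are that `σ^{I1}` is the line through `v₀`, the
Iwahori decomposition `K = I_K ∪ ⋃_{u∈R} u β_K I_K`, that `I_K` acts on `v₀` by a
character, and (Herzig–Vignéras) that either `σ` is a character on `β_K v₀` or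
`β_K v₀ ∈ σ(I'_{1,K})(W)`, where every element of `I'_{1,K}` acts through `σ` as some
`β_K u β_K` with `u ∈ R` (since `K¹` acts trivially). -/
theorem weight_generated_by_translates
    {k K W : Type*} [Field k] [Group K] [AddCommGroup W] [Module k W]
    (σ : Representation k K W)
    (I1 IK I1' : Subgroup K) (βK : K) (R : Finset K) (v₀ : W)
    (hv₀ne : v₀ ≠ 0)
    (hfix : ∀ i ∈ I1, σ i v₀ = v₀)
    (hinv : ∀ w : W, (∀ i ∈ I1, σ i w = w) → ∃ c : k, w = c • v₀)
    (hirr : ∀ U : Submodule k W, U ≠ ⊥ → (∀ (g : K), ∀ w ∈ U, σ g w ∈ U) → U = ⊤)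
    (hdecomp : ∀ g : K, g ∈ IK ∨ ∃ u ∈ R, ∃ i ∈ IK, g = u * βK * i)
    (hchar : ∀ i ∈ IK, ∃ c : k, σ i v₀ = c • v₀)
    (hHV : (∃ c : k, σ βK v₀ = c • v₀) ∨
        σ βK v₀ ∈ Submodule.span k {w : W | ∃ i ∈ I1', ∃ x : W, w = σ i x - x})
    (hI1'fix : ∀ i ∈ I1', σ i (σ βK v₀) = σ βK v₀)
    (hI1'str : ∀ i ∈ I1', ∃ u ∈ R, ∀ x : W, σ i x = σ (βK * u * βK) x) :
    Submodule.span k {w : W | ∃ u ∈ R, w = σ (u * βK) v₀} = ⊤ := by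
  classical
  set S : Set W := {w : W | ∃ u ∈ R, w = σ (u * βK) v₀} with hS
  set V : Submodule k W := Submodule.span k S with hVdef
  have hmul : ∀ (g h : K) (x : W), σ g (σ h x) = σ (g * h) x := by
    intro g h x; rw [map_mul]; rfl
  have hone : ∀ x : W, σ 1 x = x := by intro x; rw [map_one]; rfl
  have hAinj : ∀ x y : W, σ βK x = σ βK y → x = y := by
    intro x y h
    have h2 := congrArg (σ βK⁻¹) h
    rwa [hmul, hmul, inv_mul_cancel, hone, hone] at h2
  have hSsub : ∀ u ∈ R, σ (u * βK) v₀ ∈ V := by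
    intro u hu; exact Submodule.subset_span ⟨u, hu, rfl⟩
  have htrans : ∀ g : K, (∃ c : k, σ g v₀ = c • v₀) ∨ σ g v₀ ∈ V := by
    intro g
    rcases hdecomp g with hg | ⟨u, hu, i, hi, rfl⟩
    · exact Or.inl (hchar g hg)
    · right
      obtain ⟨c, hc⟩ := hchar i hi
      have h1 : σ (u * βK * i) v₀ = c • σ (u * βK) v₀ := by
        rw [← hmul (u * βK) i v₀, hc, map_smul]
      rw [h1]
      exact Submodule.smul_mem _ _ (hSsub u hu)
  have hUinv : ∀ (g : K), ∀ w ∈ V ⊔ Submodule.span k {v₀},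
      σ g w ∈ V ⊔ Submodule.span k {v₀} := by
    intro g w hw
    have hle : V ⊔ Submodule.span k {v₀} ≤
        Submodule.comap (σ g) (V ⊔ Submodule.span k {v₀}) := by
      apply sup_le
      · rw [hVdef, Submodule.span_le]
        rintro _ ⟨u, hu, rfl⟩
        simp only [SetLike.mem_coe, Submodule.mem_comap]
        rw [hmul]
        rcases htrans (g * (u * βK)) with ⟨c, hc⟩ | hmem
        · rw [hc]
          exact Submodule.mem_sup_right
            (Submodule.smul_mem _ _ (Submodule.mem_span_singleton_self v₀))
        · exact Submodule.mem_sup_left hmem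
      · rw [Submodule.span_le, Set.singleton_subset_iff]
        simp only [SetLike.mem_coe, Submodule.mem_comap]
        rcases htrans g with ⟨c, hc⟩ | hmem
        · rw [hc]
          exact Submodule.mem_sup_right
            (Submodule.smul_mem _ _ (Submodule.mem_span_singleton_self v₀))
        · exact Submodule.mem_sup_left hmem
    exact hle hw
  have hUtop : V ⊔ Submodule.span k {v₀} = ⊤ := by
    apply hirr _ _ hUinv
    intro hbot
    have hm : v₀ ∈ V ⊔ Submodule.span k {v₀} :=
      Submodule.mem_sup_right (Submodule.mem_span_singleton_self v₀)
    rw [hbot, Submodule.mem_bot] at hm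
    exact hv₀ne hm
  have hv₀V : v₀ ∈ V := by
    rcases hHV with ⟨c, hc⟩ | hz
    · -- character case
      obtain ⟨u₀, hu₀R, hu₀⟩ := hI1'str 1 (one_mem I1')
      have hid : ∀ x : W, σ (βK * u₀ * βK) x = x := by
        intro x; rw [← hu₀ x, hone]
      have hcne : c ≠ 0 := by
        intro h0
        rw [h0, zero_smul] at hc
        have h2 : σ βK v₀ = σ βK 0 := by rw [hc, map_zero]
        exact hv₀ne (hAinj _ _ h2)
      have hy : σ βK (σ (u₀ * βK) v₀) = v₀ := by
        rw [hmul, ← mul_assoc]; exact hid v₀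
      have hy2 : σ βK (c⁻¹ • v₀) = v₀ := by
        rw [map_smul, hc, smul_smul, inv_mul_cancel₀ hcne, one_smul]
      have heq : σ (u₀ * βK) v₀ = c⁻¹ • v₀ := hAinj _ _ (by rw [hy, hy2])
      have hv : v₀ = c • σ (u₀ * βK) v₀ := by
        rw [heq, smul_smul, mul_inv_cancel₀ hcne, one_smul]
      rw [hv]
      exact Submodule.smul_mem _ _ (hSsub u₀ hu₀R)
    · -- big cell case
      by_contra hv
      set z : W := σ βK v₀ with hzdef
      set Vz : Submodule k W := Submodule.map (σ βK : W →ₗ[k] W) V with hVzdef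
      have hzVz : z ∉ Vz := by
        rintro ⟨v, hvV, hAv⟩
        have : v = v₀ := hAinj v v₀ (by rw [hAv])
        exact hv (this ▸ hvV)
      have hsurj : LinearMap.range (σ βK : W →ₗ[k] W) = ⊤ := by
        rw [LinearMap.range_eq_top]
        intro w
        exact ⟨σ βK⁻¹ w, by rw [hmul, mul_inv_cancel, hone]⟩
      have htopz : Vz ⊔ Submodule.span k {z} = ⊤ := by
        have h1 : Submodule.map (σ βK : W →ₗ[k] W) (Submodule.span k {v₀}) =
            Submodule.span k {z} := by
          rw [Submodule.map_span, Set.image_singleton]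
        rw [hVzdef, ← h1, ← Submodule.map_sup, hUtop, Submodule.map_top, hsurj]
      have hD : ∀ i ∈ I1', ∀ x : W, σ i x - x ∈ Vz := by
        intro i hi
        obtain ⟨ui, huiR, hui⟩ := hI1'str i hi
        have hle : Vz ⊔ Submodule.span k {z} ≤
            Submodule.comap ((σ i : W →ₗ[k] W) - LinearMap.id) Vz := by
          apply sup_le
          · have hVzspan : Vz = Submodule.span k ((σ βK : W →ₗ[k] W) '' S) := by
              rw [hVzdef, hVdef, Submodule.map_span]
            conv_lhs => rw [hVzspan]
            rw [Submodule.span_le]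
            rintro _ ⟨_, ⟨u', hu', rfl⟩, rfl⟩
            simp only [SetLike.mem_coe, Submodule.mem_comap, LinearMap.sub_apply,
              LinearMap.id_apply]
            have hx0 : (σ βK) (σ (u' * βK) v₀) ∈ Vz :=
              Submodule.mem_map_of_mem (hSsub u' hu')
            have hgrp : βK * ui * βK * βK * (u' * βK) =
                βK * (ui * βK * (βK * (u' * βK))) := by group
            have hstep : σ i ((σ βK) (σ (u' * βK) v₀)) =
                σ βK (σ (ui * βK * (βK * (u' * βK))) v₀) := by
              rw [hui, hmul, hmul, hmul, hgrp]
            rcases hdecomp (ui * βK * (βK * (u' * βK))) with hG | ⟨u'', hu'', j, hj, hGeq⟩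
            · obtain ⟨c, hcv⟩ := hchar _ hG
              have h1 : σ i ((σ βK) (σ (u' * βK) v₀)) = c • z := by
                rw [hstep, hcv, map_smul]
              have h2 : (σ βK) (σ (u' * βK) v₀) = c • z := by
                have h3 := congrArg (σ i⁻¹) h1
                rw [hmul, inv_mul_cancel, hone, map_smul,
                  hI1'fix i⁻¹ (inv_mem hi)] at h3
                exact h3
              have hc0 : c = 0 := by
                by_contra hcne
                apply hzVz
                have hm : c • z ∈ Vz := h2 ▸ hx0
                have hm2 := Submodule.smul_mem Vz c⁻¹ hm
                rwa [smul_smul, inv_mul_cancel₀ hcne, one_smul] at hm2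
              rw [h1, h2, hc0, zero_smul, sub_zero]
              exact Submodule.zero_mem Vz
            · have hmem : σ i ((σ βK) (σ (u' * βK) v₀)) ∈ Vz := by
                rw [hstep, hGeq]
                obtain ⟨c, hci⟩ := hchar j hj
                have h4 : σ (u'' * βK * j) v₀ = c • σ (u'' * βK) v₀ := by
                  rw [← hmul (u'' * βK) j v₀, hci, map_smul]
                rw [h4, map_smul]
                exact Submodule.smul_mem _ _
                  (Submodule.mem_map_of_mem (hSsub u'' hu''))
              exact Submodule.sub_mem _ hmem hx0
          · rw [Submodule.span_le, Set.singleton_subset_iff]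
            simp only [SetLike.mem_coe, Submodule.mem_comap, LinearMap.sub_apply,
              LinearMap.id_apply]
            rw [hI1'fix i hi]
            simp
        intro x
        have hx : x ∈ Vz ⊔ Submodule.span k {z} := by rw [htopz]; trivial
        have := hle hx
        simpa [Submodule.mem_comap, LinearMap.sub_apply] using this
      have hDle : Submodule.span k {w : W | ∃ i ∈ I1', ∃ x : W, w = σ i x - x} ≤ Vz := by
        rw [Submodule.span_le]
        rintro _ ⟨i, hi, x, rfl⟩
        exact hD i hi x
      exact hzVz (hDle hz)
  -- conclude
  apply hirr
  · intro hbot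
    rw [hbot, Submodule.mem_bot] at hv₀V
    exact hv₀ne hv₀V
  · intro g w hw
    have hle : V ≤ Submodule.comap (σ g) V := by
      rw [hVdef, Submodule.span_le]
      rintro _ ⟨u, hu, rfl⟩
      simp only [SetLike.mem_coe, Submodule.mem_comap]
      rw [hmul]
      rcases htrans (g * (u * βK)) with ⟨c, hc⟩ | hmem
      · rw [hc]; exact Submodule.smul_mem _ _ hv₀V
      · exact hmem
    exact hle hw
end
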